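/- |b − √(c h / 2)| ≤ (c³/(8√2))(M'' + 6 (M')²), where b = √a. -/

import Mathlib

/-!
Write `v = r (1 + V)` with `r x = √(c² - x²)`. Against the weight `r`, the constant `1` has
integral `π c² / 2` and `x` has integral `0`, so replacing `V` by its tangent line at `0` costs
only the second-order Taylor remainder: `a = c² (1 + V 0) / 2 + O(M'' c⁴)`. At the maximiser the
first-order condition `z₀ (1 + V z₀) = r(z₀)² V'(z₀)` forces `|z₀| ≤ c² M'`, whence
`c (1 + V 0) ≤ h ≤ c (1 + V 0) + c³ M'²`. So `a` and `c h / 2` are both at least `c² / 2` and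
differ by `O(c⁴ (M'' + M'²))`, and `√a - √b = (a - b) / (√a + √b)`.
-/

open Real Set MeasureTheory intervalIntegral
open scoped Interval

theorem abs_sub_sub_mul_sub_le_of_abs_deriv_sub_le {f f' : ℝ → ℝ} {a x K : ℝ}
    (hf : ∀ t ∈ [[a, x]], HasDerivAt f (f' t) t) (hf' : IntervalIntegrable f' volume a x)
    (hK : ∀ t ∈ [[a, x]], |f' t - f' a| ≤ K * |t - a|) :
    |f x - f a - f' a * (x - a)| ≤ K / 2 * (x - a) ^ 2 := by
  have hftc : ∫ t in a..x, (f' t - f' a) = f x - f a - f' a * (x - a) := by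
    rw [integral_sub hf' intervalIntegrable_const, integral_eq_sub_of_hasDerivAt hf hf',
      intervalIntegral.integral_const, smul_eq_mul, mul_comm]
  rw [← hftc]
  calc ‖∫ t in a..x, (f' t - f' a)‖ ≤ ∫ t in Ι a x, ‖f' t - f' a‖ :=
        norm_integral_le_integral_norm_uIoc
    _ ≤ ∫ t in Ι a x, K * |t - a| ^ 1 := by
        refine setIntegral_mono_on ?_ ?_ measurableSet_uIoc fun t ht => ?_
        · exact (hf'.sub intervalIntegrable_const).abs.def'
        · exact Continuous.integrableOn_uIoc (by fun_prop : Continuous fun t => K * |t - a| ^ 1)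
        · simpa using hK t (uIoc_subset_uIcc ht)
    _ = K / 2 * (x - a) ^ 2 := by
        rw [MeasureTheory.integral_const_mul, integral_pow_abs_sub_uIoc, sq_abs]
        ring

theorem abs_sub_sub_mul_sub_le_of_abs_second_deriv_le {f f' f'' : ℝ → ℝ} {p q a x K : ℝ}
    (hf : ∀ t ∈ Icc p q, HasDerivAt f (f' t) t) (hf' : ∀ t ∈ Icc p q, HasDerivAt f' (f'' t) t)
    (hK : ∀ t ∈ Icc p q, |f'' t| ≤ K) (ha : a ∈ Icc p q) (hx : x ∈ Icc p q) :
    |f x - f a - f' a * (x - a)| ≤ K / 2 * (x - a) ^ 2 := by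
  have hsub : [[a, x]] ⊆ Icc p q := uIcc_subset_Icc ha hx
  refine abs_sub_sub_mul_sub_le_of_abs_deriv_sub_le (fun t ht => hf t (hsub ht)) ?_
    fun t ht => ?_
  · exact ContinuousOn.intervalIntegrable fun t ht =>
      (hf' t (hsub ht)).continuousAt.continuousWithinAt
  · exact (convex_Icc p q).norm_image_sub_le_of_norm_hasDerivWithin_le
      (fun s hs => (hf' s hs).hasDerivWithinAt) hK ha (hsub ht)

theorem integral_sqrt_sq_sub_sq {c : ℝ} (hc : 0 ≤ c) :
    ∫ x in -c..c, √(c ^ 2 - x ^ 2) = π * c ^ 2 / 2 := by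
  rcases hc.eq_or_lt with rfl | hc
  · simp
  have hscale : ∀ x : ℝ, √(c ^ 2 - (c * x) ^ 2) = c * √(1 - x ^ 2) := fun x => by
    rw [show c ^ 2 - (c * x) ^ 2 = c ^ 2 * (1 - x ^ 2) by ring, sqrt_mul (sq_nonneg c),
      sqrt_sq hc.le]
  have := integral_comp_mul_left (a := -1) (b := 1) (fun x => √(c ^ 2 - x ^ 2)) hc.ne'
  simp only [hscale, intervalIntegral.integral_const_mul, integral_sqrt_one_sub_sq, mul_neg,
    mul_one, smul_eq_mul] at this
  field_simp at this
  linarith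

theorem integral_mul_sqrt_sq_sub_sq (c : ℝ) : ∫ x in -c..c, x * √(c ^ 2 - x ^ 2) = 0 := by
  have := integral_comp_neg (a := -c) (b := c) fun x => x * √(c ^ 2 - x ^ 2)
  simp only [neg_mul, neg_sq, neg_neg, intervalIntegral.integral_neg] at this
  linarith

theorem sq_div_two_le_inv_pi_mul_integral_sqrt_sq_sub_sq_mul {c : ℝ} {g : ℝ → ℝ} (hc : 0 ≤ c)
    (hg : ContinuousOn g (Icc (-c) c)) (hg1 : ∀ x ∈ Icc (-c) c, 1 ≤ g x) :
    c ^ 2 / 2 ≤ 1 / π * ∫ x in -c..c, √(c ^ 2 - x ^ 2) * g x := by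
  rw [one_div_mul_eq_div, le_div_iff₀ pi_pos, div_mul_eq_mul_div, mul_comm _ π,
    ← integral_sqrt_sq_sub_sq hc]
  refine integral_mono_on (by linarith) (Continuous.intervalIntegrable (by fun_prop) _ _)
    ((hg.intervalIntegrable_of_Icc (by linarith)).continuousOn_mul (by fun_prop)) fun x hx => ?_
  exact le_mul_of_one_le_right (sqrt_nonneg _) (hg1 x hx)

theorem abs_integral_sqrt_sq_sub_sq_mul_sub_le {c α β K : ℝ} {f : ℝ → ℝ} (hc : 0 ≤ c)
    (hf : IntervalIntegrable f volume (-c) c)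
    (hK : ∀ x ∈ Icc (-c) c, |f x - (α + β * x)| ≤ K * x ^ 2) :
    |(∫ x in -c..c, √(c ^ 2 - x ^ 2) * f x) - π * c ^ 2 / 2 * α| ≤ 2 / 3 * K * c ^ 4 := by
  have hlin : ∫ x in -c..c, √(c ^ 2 - x ^ 2) * (α + β * x) = π * c ^ 2 / 2 * α := by
    calc ∫ x in -c..c, √(c ^ 2 - x ^ 2) * (α + β * x)
        = ∫ x in -c..c, (α * √(c ^ 2 - x ^ 2) + β * (x * √(c ^ 2 - x ^ 2))) := by
          congr 1; ext x; ring
      _ = π * c ^ 2 / 2 * α := by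
          rw [integral_add (Continuous.intervalIntegrable (by fun_prop) _ _)
              (Continuous.intervalIntegrable (by fun_prop) _ _),
            intervalIntegral.integral_const_mul, intervalIntegral.integral_const_mul,
            integral_sqrt_sq_sub_sq hc, integral_mul_sqrt_sq_sub_sq]
          ring
  have hsplit : (∫ x in -c..c, √(c ^ 2 - x ^ 2) * f x) - π * c ^ 2 / 2 * α
      = ∫ x in -c..c, √(c ^ 2 - x ^ 2) * (f x - (α + β * x)) := by
    simp only [mul_sub]
    rw [integral_sub (hf.continuousOn_mul (by fun_prop))
      (Continuous.intervalIntegrable (by fun_prop) _ _), hlin]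
  rw [hsplit, ← Real.norm_eq_abs]
  calc ‖∫ x in -c..c, √(c ^ 2 - x ^ 2) * (f x - (α + β * x))‖
      ≤ ∫ x in -c..c, c * (K * x ^ 2) := by
        refine norm_integral_le_of_norm_le (by linarith)
          (Filter.Eventually.of_forall fun x hx => ?_) (Continuous.intervalIntegrable ?_ _ _)
        · rw [Real.norm_eq_abs, abs_mul, abs_of_nonneg (sqrt_nonneg _)]
          have hsq : √(c ^ 2 - x ^ 2) ≤ c := by
            rw [sqrt_le_left hc]; nlinarith [hx.1, hx.2]
          exact mul_le_mul hsq (hK x (Ioc_subset_Icc_self hx)) (abs_nonneg _) hc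
        · fun_prop
    _ = 2 / 3 * K * c ^ 4 := by simp; ring

theorem abs_inv_pi_mul_integral_sqrt_sq_sub_sq_mul_sub_le {c K : ℝ} {f f' f'' : ℝ → ℝ}
    (hc : 0 ≤ c) (hf : ∀ x ∈ Icc (-c) c, HasDerivAt f (f' x) x)
    (hf' : ∀ x ∈ Icc (-c) c, HasDerivAt f' (f'' x) x) (hK : ∀ x ∈ Icc (-c) c, |f'' x| ≤ K) :
    |1 / π * (∫ x in -c..c, √(c ^ 2 - x ^ 2) * f x) - c ^ 2 / 2 * f 0| ≤ K * c ^ 4 / 8 := by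
  have h0 : (0 : ℝ) ∈ Icc (-c) c := ⟨by linarith, hc⟩
  have hK0 : 0 ≤ K := (abs_nonneg _).trans (hK 0 h0)
  have hfint : IntervalIntegrable f volume (-c) c :=
    ContinuousOn.intervalIntegrable_of_Icc (by linarith) fun x hx =>
      (hf x hx).continuousAt.continuousWithinAt
  have hI := abs_integral_sqrt_sq_sub_sq_mul_sub_le hc hfint (α := f 0) (β := f' 0) fun x hx => by
    convert abs_sub_sub_mul_sub_le_of_abs_second_deriv_le hf hf' hK h0 hx using 2 <;> ring
  rw [show 1 / π * (∫ x in -c..c, √(c ^ 2 - x ^ 2) * f x) - c ^ 2 / 2 * f 0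
      = ((∫ x in -c..c, √(c ^ 2 - x ^ 2) * f x) - π * c ^ 2 / 2 * f 0) / π by field_simp,
    abs_div, abs_of_pos pi_pos, div_le_iff₀ pi_pos]
  -- `2 / 3 * (K / 2) ≤ K * π / 8` because `π ≥ 8 / 3`
  nlinarith [mul_nonneg hK0 (pow_nonneg hc 4), pi_gt_three]

theorem mul_eq_of_isLocalMax_sqrt_sq_sub_sq_mul {c z g' : ℝ} {g : ℝ → ℝ}
    (hz : z ∈ Ioo (-c) c) (hg : HasDerivAt g g' z)
    (hmax : IsLocalMax (fun x => √(c ^ 2 - x ^ 2) * g x) z) :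
    z * g z = (c ^ 2 - z ^ 2) * g' := by
  have hpos : 0 < c ^ 2 - z ^ 2 := by nlinarith [hz.1, hz.2]
  have hr : HasDerivAt (fun x => √(c ^ 2 - x ^ 2)) (-(2 * z) / (2 * √(c ^ 2 - z ^ 2))) z :=
    (((hasDerivAt_pow 2 z).const_sub _).sqrt hpos.ne').congr_deriv (by simp)
  have hcrit := hmax.hasDerivAt_eq_zero (hr.mul hg)
  have hs : 0 < √(c ^ 2 - z ^ 2) := sqrt_pos.2 hpos
  field_simp at hcrit
  rw [sq_sqrt hpos.le] at hcrit
  linarith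

theorem abs_le_of_isLocalMax_sqrt_sq_sub_sq_mul {c z g' M : ℝ} {g : ℝ → ℝ}
    (hz : z ∈ Ioo (-c) c) (hg : HasDerivAt g g' z)
    (hmax : IsLocalMax (fun x => √(c ^ 2 - x ^ 2) * g x) z) (hgz : 1 ≤ g z) (hg' : |g'| ≤ M) :
    |z| ≤ c ^ 2 * M := by
  have h := congrArg abs (mul_eq_of_isLocalMax_sqrt_sq_sub_sq_mul hz hg hmax)
  rw [abs_mul, abs_mul, abs_of_pos (by linarith : 0 < g z),
    abs_of_nonneg (by nlinarith [hz.1, hz.2] : 0 ≤ c ^ 2 - z ^ 2)] at h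
  nlinarith [abs_nonneg z, abs_nonneg g', sq_nonneg z]

theorem sqrt_sq_sub_sq_mul_le_of_isLocalMax {c z M : ℝ} {g g' : ℝ → ℝ} (hz : z ∈ Ioo (-c) c)
    (hg : ∀ t ∈ Icc (-c) c, HasDerivAt g (g' t) t) (hg1 : ∀ t ∈ Icc (-c) c, 1 ≤ g t)
    (hg' : ∀ t ∈ Icc (-c) c, |g' t| ≤ M)
    (hmax : IsLocalMax (fun x => √(c ^ 2 - x ^ 2) * g x) z) :
    √(c ^ 2 - z ^ 2) * g z ≤ c * g 0 + c ^ 3 * M ^ 2 := by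
  have hc : 0 < c := by linarith [hz.1, hz.2]
  have h0 : (0 : ℝ) ∈ Icc (-c) c := ⟨by linarith, hc.le⟩
  have hzI : z ∈ Icc (-c) c := Ioo_subset_Icc_self hz
  have hzM : |z| ≤ c ^ 2 * M :=
    abs_le_of_isLocalMax_sqrt_sq_sub_sq_mul hz (hg z hzI) hmax (hg1 z hzI) (hg' z hzI)
  have hgz : g z - g 0 ≤ M * |z - 0| := (le_abs_self _).trans <|
    (convex_Icc (-c) c).norm_image_sub_le_of_norm_hasDerivWithin_le
      (fun t ht => (hg t ht).hasDerivWithinAt) hg' h0 hzI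
  have hr : √(c ^ 2 - z ^ 2) ≤ c := by rw [sqrt_le_left hc.le]; nlinarith
  have hM : 0 ≤ M := (abs_nonneg _).trans (hg' 0 h0)
  calc √(c ^ 2 - z ^ 2) * g z ≤ c * g z := by gcongr; linarith [hg1 z hzI]
    _ ≤ c * (g 0 + M * (c ^ 2 * M)) := by
        gcongr; rw [sub_zero] at hgz; nlinarith
    _ = c * g 0 + c ^ 3 * M ^ 2 := by ring

theorem abs_sqrt_sub_sqrt_le {a b m : ℝ} (hm : 0 < m) (ha : m ≤ a) (hb : m ≤ b) :
    |√a - √b| ≤ |a - b| / (2 * √m) := by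
  have hsa : √m ≤ √a := sqrt_le_sqrt ha
  have hsb : √m ≤ √b := sqrt_le_sqrt hb
  have hsm : 0 < √m := sqrt_pos.2 hm
  rw [le_div_iff₀ (by positivity)]
  calc |√a - √b| * (2 * √m) ≤ |√a - √b| * (√a + √b) := by gcongr; linarith
    _ = |a - b| := by
        rw [← abs_of_nonneg (by positivity : 0 ≤ √a + √b), ← abs_mul]
        congr 1
        linear_combination sq_sqrt (hm.le.trans ha) - sq_sqrt (hm.le.trans hb)

theorem stmt_10_general
    (c : ℝ) (hc : 0 < c)
    (V V' V'' : ℝ → ℝ)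
    (hV1 : ∀ x ∈ Set.Icc (-c) c, HasDerivAt V (V' x) x)
    (hV2 : ∀ x ∈ Set.Icc (-c) c, HasDerivAt V' (V'' x) x)
    (hVnn : ∀ x ∈ Set.Icc (-c) c, 0 ≤ V x)
    (r v : ℝ → ℝ)
    (hr : ∀ x, r x = Real.sqrt (c ^ 2 - x ^ 2))
    (hv : ∀ x, v x = r x * (1 + V x))
    (z₀ : ℝ) (hz₀ : z₀ ∈ Set.Ioo (-c) c)
    (hmax : ∀ x ∈ Set.Icc (-c) c, v x ≤ v z₀)
    (M' M'' : ℝ)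
    (hM' : IsLUB ((fun x => |V' x|) '' Set.Icc (-c) c) M')
    (hM'' : IsLUB ((fun x => |V'' x|) '' Set.Icc (-c) c) M'')
    (a : ℝ) (ha : a = (1 / Real.pi) * ∫ x in (-c)..c, v x)
    :
    |Real.sqrt a - Real.sqrt (c * v z₀ / 2)| ≤ c ^ 3 / (8 * Real.sqrt 2) * (M'' + 6 * M' ^ 2) := by
  obtain rfl : r = fun x => √(c ^ 2 - x ^ 2) := funext hr
  obtain rfl : v = fun x => √(c ^ 2 - x ^ 2) * (1 + V x) := funext hv
  simp only at hmax ha ⊢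
  have h0 : (0 : ℝ) ∈ Icc (-c) c := ⟨by linarith, hc.le⟩
  have hg : ∀ x ∈ Icc (-c) c, HasDerivAt (fun x => 1 + V x) (V' x) x :=
    fun x hx => (hV1 x hx).const_add 1
  have hg1 : ∀ x ∈ Icc (-c) c, 1 ≤ 1 + V x := fun x hx => by linarith [hVnn x hx]
  have hmean : |a - c ^ 2 / 2 * (1 + V 0)| ≤ M'' * c ^ 4 / 8 :=
    ha ▸ abs_inv_pi_mul_integral_sqrt_sq_sub_sq_mul_sub_le hc.le hg hV2
      fun x hx => hM''.1 (mem_image_of_mem _ hx)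
  have ha_low : c ^ 2 / 2 ≤ a := ha ▸ sq_div_two_le_inv_pi_mul_integral_sqrt_sq_sub_sq_mul hc.le
    (fun x hx => (hg x hx).continuousAt.continuousWithinAt) hg1
  set h := √(c ^ 2 - z₀ ^ 2) * (1 + V z₀)
  have hlow : c * (1 + V 0) ≤ h := by simpa [sqrt_sq hc.le] using hmax 0 h0
  have hupp : h ≤ c * (1 + V 0) + c ^ 3 * M' ^ 2 :=
    sqrt_sq_sub_sq_mul_le_of_isLocalMax hz₀ hg hg1 (fun x hx => hM'.1 (mem_image_of_mem _ hx)) <|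
      Filter.mem_of_superset (Ioo_mem_nhds hz₀.1 hz₀.2) fun x hx => hmax x (Ioo_subset_Icc_self hx)
  have hh_low : c ^ 2 / 2 ≤ c * h / 2 := by nlinarith [hg1 0 h0]
  have hdiff : |a - c * h / 2| ≤ c ^ 4 / 8 * (M'' + 6 * M' ^ 2) := by
    rw [abs_le] at hmean ⊢
    constructor <;> nlinarith [sq_nonneg M', pow_nonneg hc.le 4]
  have hc2 : 2 * √(c ^ 2 / 2) = c * √2 := by
    rw [sqrt_div' _ zero_le_two, sqrt_sq hc.le]
    field_simp
    exact (sq_sqrt zero_le_two).symm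
  calc |√a - √(c * h / 2)| ≤ |a - c * h / 2| / (2 * √(c ^ 2 / 2)) :=
        abs_sqrt_sub_sqrt_le (by positivity) ha_low hh_low
    _ ≤ c ^ 4 / 8 * (M'' + 6 * M' ^ 2) / (c * √2) := by rw [hc2]; gcongr
    _ = c ^ 3 / (8 * √2) * (M'' + 6 * M' ^ 2) := by field_simp

theorem stmt_10
    (c : ℝ) (hc : 0 < c)
    (V V' V'' : ℝ → ℝ)
    (hV1 : ∀ x ∈ Set.Icc (-c) c, HasDerivAt V (V' x) x)
    (hV2 : ∀ x ∈ Set.Icc (-c) c, HasDerivAt V' (V'' x) x)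
    (hV2c : ContinuousOn V'' (Set.Icc (-c) c))
    (hVnn : ∀ x ∈ Set.Icc (-c) c, 0 ≤ V x)
    (r v : ℝ → ℝ)
    (hr : ∀ x, r x = Real.sqrt (c ^ 2 - x ^ 2))
    (hv : ∀ x, v x = r x * (1 + V x))
    (z₀ : ℝ) (hz₀ : z₀ ∈ Set.Ioo (-c) c)
    (hmax : ∀ x ∈ Set.Icc (-c) c, v x ≤ v z₀)
    (M M' M'' : ℝ)
    (hM : IsLUB (V '' Set.Icc (-c) c) M)
    (hM' : IsLUB ((fun x => |V' x|) '' Set.Icc (-c) c) M')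
    (hM'' : IsLUB ((fun x => |V'' x|) '' Set.Icc (-c) c) M'')
    (a : ℝ) (ha : a = (1 / Real.pi) * ∫ x in (-c)..c, v x)
    :
    |Real.sqrt a - Real.sqrt (c * v z₀ / 2)| ≤ c ^ 3 / (8 * Real.sqrt 2) * (M'' + 6 * M' ^ 2) :=
  stmt_10_general c hc V V' V'' hV1 hV2 hVnn r v hr hv z₀ hz₀ hmax M' M'' hM' hM'' a ha
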